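/- The fan graph F_{m,n} = I_m ∇ P_n (the join of an independent set on m vertices with a path on n vertices) is a square if and only if m ≥ 2, or (m = 1 and n ≥ 3 is odd). -/

import Mathlib

open SimpleGraph

/-- Butterfly involution data: `φ` is an involutive automorphism of `G`, with nonempty
fixed set and nonempty non-fixed set, the common-neighbor condition, and a partition
`A0 ∪ A1` of the non-fixed vertices with no crossing edges, swapped by `φ`. -/
def ButterflyData {V : Type*} (G : SimpleGraph V) (phi : G ≃g G) (A0 A1 : Set V) : Prop :=
  Function.Involutive phi ∧
  (∃ v, phi v = v) ∧ (∃ v, phi v ≠ v) ∧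
  (∀ u : V, phi u ≠ u →
    G.neighborSet u ∩ G.neighborSet (phi u) = G.neighborSet u ∩ {v | phi v = v}) ∧
  A0 ∪ A1 = {v | phi v ≠ v} ∧ Disjoint A0 A1 ∧
  (∀ a ∈ A0, ∀ b ∈ A1, ¬ G.Adj a b) ∧
  (∀ a ∈ A0, phi a ∈ A1) ∧ (∀ a ∈ A1, phi a ∈ A0)

/-- A graph is a square (in the gluing algebra) iff it admits a butterfly involution. -/
def IsSquareGraph {V : Type*} (G : SimpleGraph V) : Prop :=
  ∃ (phi : G ≃g G) (A0 A1 : Set V), ButterflyData G phi A0 A1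

/-- The join `G ∇ H` of two graphs: all edges of each, plus all cross edges. -/
def joinGraph {α β : Type*} (G : SimpleGraph α) (H : SimpleGraph β) :
    SimpleGraph (α ⊕ β) where
  Adj x y := match x, y with
    | Sum.inl a, Sum.inl b => G.Adj a b
    | Sum.inr a, Sum.inr b => H.Adj a b
    | _, _ => True
  symm := ⟨by rintro (a | a) (b | b) h <;> first | exact h.symm | trivial⟩
  loopless := ⟨by rintro (a | a) h <;> exact SimpleGraph.irrefl _ h⟩

/-!
For `m ≥ 2` two vertices of `I_m` have the same neighbourhood, and swapping them is a butterfly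
involution with wings `{a}` and `{b}`. For `n = 2k + 1 ≥ 3` the reversal of the path, fixing the
middle vertex and all of `I_m`, is one whose wings are the two halves of the path.

Conversely let `m = 1`. A moved vertex is never adjacent to its image (they lie in different
wings), so the apex, adjacent to everything, is fixed, and `φ` restricts to a non-trivial injective
endomorphism of `P_n`, which must be the reversal. This forces `n ≠ 1`, and if `n` were even the
reversal would move every vertex of the connected path, putting the whole path in one wing,
although `φ` exchanges the wings.
-/

open Function

section joinGraph

variable {α β : Type*} {G : SimpleGraph α} {H : SimpleGraph β}

@[simp] theorem joinGraph_adj_inl_inl {a b : α} :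
    (joinGraph G H).Adj (Sum.inl a) (Sum.inl b) ↔ G.Adj a b := Iff.rfl

@[simp] theorem joinGraph_adj_inr_inr {a b : β} :
    (joinGraph G H).Adj (Sum.inr a) (Sum.inr b) ↔ H.Adj a b := Iff.rfl

@[simp] theorem joinGraph_adj_inl_inr {a : α} {b : β} :
    (joinGraph G H).Adj (Sum.inl a) (Sum.inr b) := trivial

@[simp] theorem joinGraph_adj_inr_inl {a : α} {b : β} :
    (joinGraph G H).Adj (Sum.inr b) (Sum.inl a) := trivial

def joinGraph.inrHom (G : SimpleGraph α) (H : SimpleGraph β) : H →g joinGraph G H :=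
  ⟨Sum.inr, id⟩

variable {α' β' : Type*} {G' : SimpleGraph α'} {H' : SimpleGraph β'}

def joinGraphCongr (σ : G ≃g G') (τ : H ≃g H') : joinGraph G H ≃g joinGraph G' H' where
  toEquiv := Equiv.sumCongr σ.toEquiv τ.toEquiv
  map_rel_iff' := by
    rintro (a | a) (b | b)
    · exact σ.map_rel_iff'
    · exact Iff.rfl
    · exact Iff.rfl
    · exact τ.map_rel_iff'

@[simp] theorem joinGraphCongr_apply (σ : G ≃g G') (τ : H ≃g H') (x : α ⊕ β) :
    joinGraphCongr σ τ x = Sum.map σ τ x := by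
  cases x <;> rfl

end joinGraph

namespace ButterflyData

variable {V : Type*} {G : SimpleGraph V} {φ : G ≃g G} {A0 A1 : Set V}

theorem mem_union_of_apply_ne (hB : ButterflyData G φ A0 A1) {u : V} (hu : φ u ≠ u) :
    u ∈ A0 ∪ A1 := by
  have ⟨_, _, _, _, hunion, _⟩ := hB
  rw [hunion]
  exact hu

theorem apply_mem_left_iff (hB : ButterflyData G φ A0 A1) {u : V} (hu : φ u ≠ u) :
    φ u ∈ A0 ↔ u ∉ A0 := by
  have hu01 := hB.mem_union_of_apply_ne hu
  obtain ⟨-, -, -, -, -, hdisj, -, h01, h10⟩ := hB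
  exact ⟨fun hφu hu0 => hdisj.notMem_of_mem_left hφu (h01 u hu0),
    fun hu0 => h10 u (hu01.resolve_left hu0)⟩

theorem mem_left_iff_of_adj (hB : ButterflyData G φ A0 A1) {u v : V} (hu : φ u ≠ u)
    (hv : φ v ≠ v) (huv : G.Adj u v) : u ∈ A0 ↔ v ∈ A0 := by
  have hu01 := hB.mem_union_of_apply_ne hu
  have hv01 := hB.mem_union_of_apply_ne hv
  obtain ⟨-, -, -, -, -, hdisj, hcross, -, -⟩ := hB
  rcases hu01 with hu0 | hu1 <;> rcases hv01 with hv0 | hv1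
  · exact iff_of_true hu0 hv0
  · exact absurd huv (hcross u hu0 v hv1)
  · exact absurd huv.symm (hcross v hv0 u hu1)
  · exact iff_of_false (hdisj.notMem_of_mem_right hu1) (hdisj.notMem_of_mem_right hv1)

theorem not_adj_apply (hB : ButterflyData G φ A0 A1) {u : V} (hu : φ u ≠ u) :
    ¬G.Adj u (φ u) := fun hadj => by
  have hφu : φ (φ u) ≠ φ u := by rwa [hB.1 u, ne_comm]
  exact iff_not_self ((hB.mem_left_iff_of_adj hu hφu hadj).trans (hB.apply_mem_left_iff hu))

theorem apply_eq_self_of_forall_adj (hB : ButterflyData G φ A0 A1) {u : V}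
    (hu : ∀ v, v ≠ u → G.Adj u v) : φ u = u := by
  by_contra h
  exact hB.not_adj_apply h (hu _ h)

/-- A connected set of moved vertices lies inside one wing, and `φ` exchanges the wings. -/
theorem apply_ne_of_preconnected {W : Type*} {H : SimpleGraph W} (hB : ButterflyData G φ A0 A1)
    (ι : H →g G) (hH : H.Preconnected) (hmov : ∀ x, φ (ι x) ≠ ι x) (x y : W) :
    φ (ι x) ≠ ι y := by
  have hwing : ι x ∈ A0 ↔ ι y ∈ A0 := by
    obtain ⟨p⟩ := hH x y
    induction p with
    | nil => rfl
    | cons h _ ih => exact (hB.mem_left_iff_of_adj (hmov _) (hmov _) (ι.map_adj h)).trans ih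
  intro hxy
  have := hB.apply_mem_left_iff (hmov x)
  rw [hxy, ← hwing] at this
  exact iff_not_self this

theorem joinGraph_right {β : Type*} {H : SimpleGraph β} {τ : H ≃g H} {B0 B1 : Set β}
    (hB : ButterflyData H τ B0 B1) (G : SimpleGraph V) :
    ButterflyData (joinGraph G H) (joinGraphCongr Iso.refl τ)
      (Sum.inr '' B0) (Sum.inr '' B1) := by
  obtain ⟨hinv, ⟨f, hf⟩, ⟨u, hu⟩, hnb, hunion, hdisj, hcross, h01, h10⟩ := hB
  refine ⟨?_, ⟨Sum.inr f, by simp [hf]⟩, ⟨Sum.inr u, by simpa using hu⟩, ?_, ?_,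
    (Set.disjoint_image_iff Sum.inr_injective).2 hdisj, ?_, ?_, ?_⟩
  · rintro (a | b)
    · rfl
    · simp [hinv b]
  · rintro (a | b) hb
    · simp at hb
    · have hnbb := hnb b (by simpa using hb)
      ext (c | c)
      · simp [mem_neighborSet]
      · simpa [mem_neighborSet] using congrArg (c ∈ ·) hnbb
  · ext (a | b)
    · simp
    · simpa using congrArg (b ∈ ·) hunion
  · rintro _ ⟨a, ha, rfl⟩ _ ⟨b, hb, rfl⟩
    exact hcross a ha b hb
  · rintro _ ⟨a, ha, rfl⟩
    exact ⟨τ a, h01 a ha, rfl⟩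
  · rintro _ ⟨a, ha, rfl⟩
    exact ⟨τ a, h10 a ha, rfl⟩

end ButterflyData

theorem IsSquareGraph.joinGraph_right {α β : Type*} {H : SimpleGraph β} (hH : IsSquareGraph H)
    (G : SimpleGraph α) : IsSquareGraph (joinGraph G H) :=
  let ⟨_, _, _, hB⟩ := hH
  ⟨_, _, _, hB.joinGraph_right G⟩

section Twins

variable {V : Type*} [DecidableEq V] {G : SimpleGraph V} {a b : V}

def SimpleGraph.Iso.swapOfNeighborSetEq (hab : G.neighborSet a = G.neighborSet b) : G ≃g G where
  toEquiv := Equiv.swap a b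
  map_rel_iff' {x y} := by
    have h : ∀ v, G.Adj a v ↔ G.Adj b v := fun v => Set.ext_iff.1 hab v
    simp only [Equiv.swap_apply_def]
    split_ifs <;> subst_vars <;> grind [adj_comm, SimpleGraph.irrefl]

@[simp] theorem SimpleGraph.Iso.swapOfNeighborSetEq_apply
    (hab : G.neighborSet a = G.neighborSet b) (x : V) :
    Iso.swapOfNeighborSetEq hab x = Equiv.swap a b x := rfl

theorem butterflyData_swapOfNeighborSetEq (hab : G.neighborSet a = G.neighborSet b)
    (hne : a ≠ b) {c : V} (hca : c ≠ a) (hcb : c ≠ b) :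
    ButterflyData G (Iso.swapOfNeighborSetEq hab) {a} {b} := by
  have hmoved : ∀ x, Equiv.swap a b x ≠ x ↔ x = a ∨ x = b := fun x => by
    rw [Equiv.swap_apply_ne_self_iff, and_iff_right hne]
  have hnadj : ∀ x, G.Adj a x → x ≠ a ∧ x ≠ b := fun x hx =>
    ⟨hx.ne', by rintro rfl; exact ((Set.ext_iff.1 hab x).1 hx).ne rfl⟩
  refine ⟨Equiv.swap_apply_self a b, ⟨c, by simp [Equiv.swap_apply_of_ne_of_ne hca hcb]⟩,
    ⟨a, by simpa using hne.symm⟩, ?_, ?_, by simpa using hne, ?_, ?_, ?_⟩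
  · intro u hu
    rw [Iso.swapOfNeighborSetEq_apply, hmoved] at hu
    have hN : G.neighborSet u = G.neighborSet a ∧
        G.neighborSet (Equiv.swap a b u) = G.neighborSet a := by
      rcases hu with rfl | rfl <;> simp [hab]
    have hfix : ∀ x ∈ G.neighborSet a, Equiv.swap a b x = x := fun x hx =>
      Equiv.swap_apply_of_ne_of_ne (hnadj x hx).1 (hnadj x hx).2
    rw [Iso.swapOfNeighborSetEq_apply, hN.1, hN.2, Set.inter_self]
    exact (Set.inter_eq_left.2 hfix).symm
  · ext x
    simp [hmoved, or_comm]
  · rintro x rfl y rfl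
    exact fun h => (hnadj y h).2 rfl
  · rintro x rfl
    simp
  · rintro x rfl
    simp

end Twins

theorem isSquareGraph_joinGraph_bot {α β : Type*} {a b : α} (hab : a ≠ b) (H : SimpleGraph β)
    [Nonempty β] : IsSquareGraph (joinGraph (⊥ : SimpleGraph α) H) := by
  classical
  have hN : (joinGraph ⊥ H).neighborSet (Sum.inl a) =
      (joinGraph ⊥ H).neighborSet (Sum.inl b) := by
    ext (x | y) <;> simp [mem_neighborSet]
  exact ⟨_, _, _, butterflyData_swapOfNeighborSetEq hN (by simpa using hab)
    (c := Sum.inr (Classical.arbitrary β)) (by simp) (by simp)⟩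

namespace SimpleGraph

def pathGraph.revIso (n : ℕ) : pathGraph n ≃g pathGraph n where
  toEquiv := Fin.revPerm
  map_rel_iff' {i j} := by
    simp only [Fin.revPerm_apply, pathGraph_adj, Fin.val_rev]
    omega

@[simp] theorem pathGraph.revIso_apply {n : ℕ} (i : Fin n) : pathGraph.revIso n i = i.rev := rfl

theorem Hom.pathGraph_eq_id_or_rev {n : ℕ} (f : pathGraph n →g pathGraph n)
    (hf : Injective f) : ⇑f = id ∨ ⇑f = Fin.rev := by
  rcases Nat.lt_or_ge n 2 with hn | hn
  · left
    funext i
    have := (f i).isLt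
    ext
    simp only [id]
    omega
  -- consecutive values differ by ±1 and never backtrack, so they form an arithmetic progression
  have hstep : ∀ i j k : Fin n, i.val + 1 = j.val → j.val + 1 = k.val →
      (f i : ℤ) + f k = 2 * f j := by
    intro i j k hij hjk
    have h1 := f.map_adj (pathGraph_adj.2 (Or.inl hij))
    have h2 := f.map_adj (pathGraph_adj.2 (Or.inl hjk))
    have h3 : f i ≠ f k := hf.ne (by rw [Ne, Fin.ext_iff]; omega)
    rw [pathGraph_adj] at h1 h2
    rw [Ne, Fin.ext_iff] at h3
    omega
  set d : ℤ := f ⟨1, by omega⟩ - f ⟨0, by omega⟩ with hd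
  have hprog : ∀ i (hi : i < n), (f ⟨i, hi⟩ : ℤ) = f ⟨0, by omega⟩ + i * d := by
    intro i
    induction i using Nat.twoStepInduction with
    | zero => simp
    | one => intro; simp [hd]
    | more i ih₀ ih₁ =>
      intro hi
      have := hstep ⟨i, by omega⟩ ⟨i + 1, by omega⟩ ⟨i + 2, hi⟩ rfl rfl
      rw [ih₀, ih₁] at this
      push_cast at this ⊢
      linear_combination this
  have hd' : d = 1 ∨ d = -1 := by
    have h01 : (pathGraph n).Adj ⟨0, by omega⟩ ⟨1, by omega⟩ := by simp [pathGraph_adj]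
    have := f.map_adj h01
    rw [pathGraph_adj] at this
    omega
  have hlast := hprog (n - 1) (by omega)
  have hb0 := (f ⟨0, by omega⟩).isLt
  have hb1 := (f ⟨n - 1, by omega⟩).isLt
  rcases hd' with h | h
  · left
    funext i
    have := hprog i i.isLt
    ext
    simp only [Fin.eta, h, id] at this hlast ⊢
    omega
  · right
    funext i
    have := hprog i i.isLt
    ext
    simp only [Fin.eta, h, Fin.val_rev] at this hlast ⊢
    omega

end SimpleGraph

theorem butterflyData_pathGraph_revIso {k : ℕ} (hk : 1 ≤ k) :
    ButterflyData (pathGraph (2 * k + 1)) (pathGraph.revIso _)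
      {i | i.val < k} {i | k < i.val} := by
  have hfix : ∀ i : Fin (2 * k + 1), i.rev = i ↔ i.val = k := by
    intro i
    rw [Fin.ext_iff, Fin.val_rev]
    omega
  refine ⟨Fin.rev_rev, ⟨⟨k, by omega⟩, by simp [hfix]⟩,
    ⟨⟨0, by omega⟩, by simp only [pathGraph.revIso_apply, ne_eq, hfix]; omega⟩, ?_, ?_, ?_, ?_,
    ?_, ?_⟩
  · intro u hu
    ext v
    simp only [pathGraph.revIso_apply, ne_eq, hfix, Set.mem_inter_iff, mem_neighborSet,
      Set.mem_ofPred_eq, pathGraph_adj, Fin.val_rev] at hu ⊢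
    omega
  · ext i
    simp only [Set.mem_union, Set.mem_ofPred_eq, pathGraph.revIso_apply, ne_eq, hfix]
    omega
  · exact Set.disjoint_left.2 fun i hi hi' => by simp_all; omega
  · intro i hi j hj
    simp_all [pathGraph_adj]
    omega
  · intro i hi
    simp_all
    omega
  · intro i hi
    simp_all
    omega

theorem isSquareGraph_pathGraph {k : ℕ} (hk : 1 ≤ k) : IsSquareGraph (pathGraph (2 * k + 1)) :=
  ⟨_, _, _, butterflyData_pathGraph_revIso hk⟩

theorem three_le_and_odd_of_isSquareGraph_joinGraph_pathGraph {α : Type*} [Unique α] {n : ℕ}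
    (h : IsSquareGraph (joinGraph (⊥ : SimpleGraph α) (pathGraph n))) : 3 ≤ n ∧ Odd n := by
  obtain ⟨φ, A0, A1, hB⟩ := h
  have hapex : φ (Sum.inl default) = Sum.inl default := by
    refine hB.apply_eq_self_of_forall_adj ?_
    rintro (a | j) h
    · exact absurd (congrArg Sum.inl (Unique.eq_default a)) h
    · simp
  have hpath : ∀ i, ∃ j, φ (Sum.inr i) = Sum.inr j := by
    intro i
    rcases h : φ (Sum.inr i) with a | j
    · rw [Unique.eq_default a, ← hapex] at h
      exact absurd (φ.injective h) Sum.inr_ne_inl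
    · exact ⟨j, rfl⟩
  choose ψ hψ using hpath
  let f : pathGraph n →g pathGraph n :=
    ⟨ψ, fun {i j} hij => by simpa [hψ] using φ.map_adj_iff.2 (joinGraph_adj_inr_inr.2 hij)⟩
  have hf : Injective f := fun i j hij =>
    Sum.inr_injective (φ.injective (by rw [hψ, hψ]; exact congrArg Sum.inr hij))
  obtain ⟨i₀, hi₀⟩ : ∃ i, ψ i ≠ i := by
    have ⟨_, _, ⟨v, hv⟩, _⟩ := hB
    rcases v with a | i
    · exact absurd (by rw [Unique.eq_default a]; exact hapex) hv
    · exact ⟨i, fun h => hv (by rw [hψ, h])⟩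
  rcases Hom.pathGraph_eq_id_or_rev f hf with hid | hrev
  · exact absurd (congrFun hid i₀) hi₀
  have hψrev : ∀ i, ψ i = i.rev := congrFun hrev
  have hodd : Odd n := by
    by_contra heven
    obtain ⟨k, rfl⟩ := Nat.not_odd_iff_even.1 heven
    have hmov : ∀ i, φ (Sum.inr i) ≠ Sum.inr i := fun i => by
      rw [hψ, hψrev, Ne, Sum.inr.injEq, Fin.ext_iff, Fin.val_rev]
      omega
    exact hB.apply_ne_of_preconnected (joinGraph.inrHom _ _) (pathGraph_preconnected _) hmov
      i₀ i₀.rev ((hψ i₀).trans (congrArg Sum.inr (hψrev i₀)))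
  refine ⟨?_, hodd⟩
  have hi₀' := hψrev i₀ ▸ hi₀
  rw [Ne, Fin.ext_iff, Fin.val_rev] at hi₀'
  obtain ⟨k, rfl⟩ := hodd
  omega

theorem stmt19 (m n : ℕ) (hm : 1 ≤ m) (hn : 1 ≤ n) :
    IsSquareGraph (joinGraph (⊥ : SimpleGraph (Fin m)) (SimpleGraph.pathGraph n)) ↔
      2 ≤ m ∨ (m = 1 ∧ 3 ≤ n ∧ Odd n) := by
  constructor
  · intro h
    rcases Nat.lt_or_ge m 2 with hm2 | hm2
    · obtain rfl : m = 1 := by omega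
      exact Or.inr ⟨rfl, three_le_and_odd_of_isSquareGraph_joinGraph_pathGraph h⟩
    · exact Or.inl hm2
  · rintro (hm2 | ⟨rfl, hn3, k, rfl⟩)
    · have : Nonempty (Fin n) := ⟨⟨0, hn⟩⟩
      exact isSquareGraph_joinGraph_bot (a := ⟨0, by omega⟩) (b := ⟨1, hm2⟩)
        (by simp [Fin.ext_iff]) _
    · exact (isSquareGraph_pathGraph (by omega)).joinGraph_right _
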